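/- arXiv:1612.01295 — 5 statements merged into one kernel-verified Lean document; each statement's English description precedes it below -/
import Mathlib

section
/- For any finite graph G and any 2-lift H of G, the number of independent sets of size k in H is at most the number of independent sets of size k in the bipartite double cover G × K₂, i.e., i_k(H) ≤ i_k(G × K₂). -/
open scoped Classical

/-- A 2-lift of `G` determined by a symmetric sign function `s` on pairs of vertices:
`s u v = false` means the edge `(u,v)` lifts to the parallel pair, `true` to the crossing pair. -/
def twoLift {V : Type} (G : SimpleGraph V) (s : V → V → Bool)
    (hs : ∀ u v, s u v = s v u) : SimpleGraph (V × Bool) where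
  Adj a b := G.Adj a.1 b.1 ∧ xor a.2 b.2 = s a.1 b.1
  symm := by
    constructor
    rintro a b ⟨h1, h2⟩
    exact ⟨h1.symm, by rw [hs b.1 a.1, ← h2]; exact Bool.xor_comm _ _⟩
  loopless := by constructor; rintro a ⟨h1, _⟩; exact G.irrefl h1

/-- The bipartite double cover `G × K₂`: the 2-lift in which every edge is crossing. -/
def doubleCover {V : Type} (G : SimpleGraph V) : SimpleGraph (V × Bool) :=
  twoLift G (fun _ _ => true) (fun _ _ => rfl)

/-- The number of independent sets of size `k` in `H`. -/
noncomputable def indepCount {W : Type} [Fintype W] (H : SimpleGraph W) (k : ℕ) : ℕ :=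
  Nat.card {I : Finset W // I.card = k ∧
    (↑I : Set W).Pairwise fun a b => ¬ H.Adj a b}

/-!
Let `I` be independent in the lift. Call `v` singly covered if exactly one of its two copies lies
in `I`, and let its label be the copy used. Across an edge `uv` of `G` joining singly covered
vertices, independence forces the labels to differ by `!s u v`; at every other edge of `G` one end
has no copy in `I` at all, so the sign of that edge is irrelevant. Switching the lift at a set of
vertices (exchanging their two copies) is an isomorphism onto another 2-lift. Switching each
vertex by its label difference to a fixed representative of its component in the graph of singly
covered vertices makes all relevant edges crossing, so the image of `I` is independent in
`G × K₂`. The map is injective: the image determines the singly covered vertices, and then the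
switching, because label differences along components are dictated by `s`.
-/

namespace SimpleGraph

variable {V : Type} {H : SimpleGraph V}

lemma Reachable.eq_of_forall_adj {α : Type*} {f : V → α} (hf : ∀ u v, H.Adj u v → f u = f v)
    {u v : V} (h : H.Reachable u v) : f u = f v := by
  obtain ⟨p⟩ := h
  induction p with
  | nil => rfl
  | cons huv _ ih => exact (hf _ _ huv).trans ih

noncomputable def componentRep (H : SimpleGraph V) (v : V) : V :=
  (H.connectedComponentMk v).out

lemma reachable_componentRep (v : V) : H.Reachable v (H.componentRep v) :=
  ConnectedComponent.exact (Quot.out_eq _).symm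

lemma componentRep_eq_of_adj {u v : V} (h : H.Adj u v) : H.componentRep u = H.componentRep v :=
  congrArg Quot.out (ConnectedComponent.connectedComponentMk_eq_of_adj h)

end SimpleGraph

open SimpleGraph

namespace TwoLift

lemma xor_eq_xor_iff_xor_eq_xor (a b c d : Bool) : xor a b = xor c d ↔ xor a c = xor b d := by
  cases a <;> cases b <;> cases c <;> cases d <;> decide

variable {V : Type}

section Relabel

def relabel (t : V → Bool) : Equiv.Perm (V × Bool) :=
  Function.Involutive.toPerm (fun p => (p.1, xor p.2 (t p.1))) fun p => by simp

@[simp]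
lemma relabel_apply (t : V → Bool) (p : V × Bool) : relabel t p = (p.1, xor p.2 (t p.1)) :=
  rfl

@[simp]
lemma relabel_symm (t : V → Bool) : (relabel t).symm = relabel t :=
  Function.Involutive.toPerm_symm _

lemma mem_map_relabel {t : V → Bool} {I : Finset (V × Bool)} {v : V} {b : Bool} :
    (v, b) ∈ I.map (relabel t).toEmbedding ↔ (v, xor b (t v)) ∈ I := by
  simp [Finset.mem_map_equiv]

lemma map_relabel_map_relabel (t : V → Bool) (I : Finset (V × Bool)) :
    (I.map (relabel t).toEmbedding).map (relabel t).toEmbedding = I := by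
  ext ⟨v, b⟩
  simp

def switch (s : V → V → Bool) (t : V → Bool) (u v : V) : Bool :=
  xor (s u v) (xor (t u) (t v))

lemma switch_symm {s : V → V → Bool} (hs : ∀ u v, s u v = s v u) (t : V → Bool) (u v : V) :
    switch s t u v = switch s t v u := by
  simp only [switch, hs u v, Bool.xor_comm (t u)]

def relabelIso (G : SimpleGraph V) {s : V → V → Bool} (hs : ∀ u v, s u v = s v u)
    (t : V → Bool) : twoLift G s hs ≃g twoLift G (switch s t) (switch_symm hs t) where
  toEquiv := relabel t
  map_rel_iff' := by
    rintro ⟨u, a⟩ ⟨v, b⟩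
    simp only [twoLift, switch, relabel_apply]
    refine and_congr_right fun _ => ?_
    cases a <;> cases b <;> cases t u <;> cases t v <;> cases s u v <;> decide

end Relabel

section SinglyCovered

def SinglyCovered (I : Finset (V × Bool)) (v : V) : Prop :=
  Xor ((v, false) ∈ I) ((v, true) ∈ I)

noncomputable def label (I : Finset (V × Bool)) (v : V) : Bool :=
  decide ((v, true) ∈ I)

variable {I : Finset (V × Bool)} {v : V}

lemma SinglyCovered.mem_iff (h : SinglyCovered I v) {b : Bool} :
    (v, b) ∈ I ↔ b = label I v := by
  rcases h with ⟨hf, ht⟩ | ⟨ht, hf⟩ <;> cases b <;> simp_all [label]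

lemma SinglyCovered.mem_label (h : SinglyCovered I v) : (v, label I v) ∈ I :=
  h.mem_iff.mpr rfl

lemma mem_of_not_singlyCovered (h : ¬ SinglyCovered I v) {a : Bool} (ha : (v, a) ∈ I)
    (b : Bool) : (v, b) ∈ I := by
  rw [SinglyCovered, not_xor] at h
  cases a <;> cases b <;> tauto

lemma singlyCovered_map_relabel {t : V → Bool} :
    SinglyCovered (I.map (relabel t).toEmbedding) v ↔ SinglyCovered I v := by
  simp only [SinglyCovered, mem_map_relabel]
  cases t v <;> simp [xor_comm ((v, true) ∈ I)]

end SinglyCovered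

def singlyCoveredGraph (G : SimpleGraph V) (I : Finset (V × Bool)) : SimpleGraph V where
  Adj u v := G.Adj u v ∧ SinglyCovered I u ∧ SinglyCovered I v
  symm := ⟨fun _ _ h => ⟨h.1.symm, h.2.2, h.2.1⟩⟩
  loopless := ⟨fun _ h => G.irrefl h.1⟩

noncomputable def alignment (G : SimpleGraph V) (I : Finset (V × Bool)) (v : V) : Bool :=
  xor (label I v) (label I ((singlyCoveredGraph G I).componentRep v))

noncomputable def align (G : SimpleGraph V) (I : Finset (V × Bool)) : Finset (V × Bool) :=
  I.map (relabel (alignment G I)).toEmbedding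

section Lift

variable {G : SimpleGraph V} {s : V → V → Bool} {hs : ∀ u v, s u v = s v u}
  {I : Finset (V × Bool)}

lemma isIndepSet_map_relabel (hI : (twoLift G s hs).IsIndepSet I) (t : V → Bool) :
    (twoLift G (switch s t) (switch_symm hs t)).IsIndepSet (I.map (relabel t).toEmbedding) := by
  rw [isIndepSet_iff, Finset.coe_map]
  exact (relabel t).injective.injOn.pairwise_image.mpr fun p hp q hq hpq hadj =>
    hI hp hq hpq ((relabelIso G hs t).map_adj_iff.mp hadj)

lemma singlyCovered_of_adj (hI : (twoLift G s hs).IsIndepSet I) {u v : V} {a b : Bool}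
    (huv : G.Adj u v) (ha : (u, a) ∈ I) (hb : (v, b) ∈ I) : SinglyCovered I u := by
  by_contra h
  refine hI (mem_of_not_singlyCovered h ha (xor b (s u v))) hb
    (fun h => huv.ne (congrArg Prod.fst h)) ⟨huv, ?_⟩
  cases b <;> cases s u v <;> rfl

lemma isIndepSet_twoLift_of_agree (hI : (twoLift G s hs).IsIndepSet I) {s' : V → V → Bool}
    (hs' : ∀ u v, s' u v = s' v u)
    (h : ∀ u v, G.Adj u v → SinglyCovered I u → SinglyCovered I v → s u v = s' u v) :
    (twoLift G s' hs').IsIndepSet I := by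
  rintro ⟨u, a⟩ ha ⟨v, b⟩ hb hne ⟨huv, hab⟩
  refine hI ha hb hne ⟨huv, ?_⟩
  rwa [h u v huv (singlyCovered_of_adj hI huv ha hb) (singlyCovered_of_adj hI huv.symm hb ha)]

lemma label_xor_label_of_adj (hI : (twoLift G s hs).IsIndepSet I) {u v : V}
    (h : (singlyCoveredGraph G I).Adj u v) : xor (label I u) (label I v) = !s u v := by
  obtain ⟨huv, hu, hv⟩ := h
  rw [Bool.eq_not_iff]
  exact fun hs => hI hu.mem_label hv.mem_label (fun h => huv.ne (congrArg Prod.fst h)) ⟨huv, hs⟩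

lemma switch_alignment_eq_true (hI : (twoLift G s hs).IsIndepSet I) {u v : V}
    (h : (singlyCoveredGraph G I).Adj u v) : switch s (alignment G I) u v = true := by
  have hlabel := label_xor_label_of_adj hI h
  rw [switch, alignment, alignment, componentRep_eq_of_adj h]
  revert hlabel
  cases label I u <;> cases label I v <;> cases s u v <;>
    cases label I ((singlyCoveredGraph G I).componentRep v) <;> decide

lemma isIndepSet_align (hI : (twoLift G s hs).IsIndepSet I) :
    (doubleCover G).IsIndepSet (align G I) :=
  isIndepSet_twoLift_of_agree (isIndepSet_map_relabel hI _) _ fun _ _ huv hu hv =>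
    switch_alignment_eq_true hI
      ⟨huv, singlyCovered_map_relabel.mp hu, singlyCovered_map_relabel.mp hv⟩

lemma alignment_eq_of_align_eq {I₁ I₂ : Finset (V × Bool)}
    (h₁ : (twoLift G s hs).IsIndepSet I₁) (h₂ : (twoLift G s hs).IsIndepSet I₂)
    (h : align G I₁ = align G I₂) :
    alignment G I₁ = alignment G I₂ := by
  have hcov (v : V) : SinglyCovered I₁ v ↔ SinglyCovered I₂ v := by
    rw [← singlyCovered_map_relabel (I := I₁) (t := alignment G I₁),
      ← singlyCovered_map_relabel (I := I₂) (t := alignment G I₂)]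
    exact Iff.of_eq (congrArg (SinglyCovered · v) h)
  have hgraph : singlyCoveredGraph G I₁ = singlyCoveredGraph G I₂ := by
    ext u v
    simp only [singlyCoveredGraph, hcov]
  funext v
  have key : xor (label I₁ v) (label I₂ v) =
      xor (label I₁ ((singlyCoveredGraph G I₁).componentRep v))
        (label I₂ ((singlyCoveredGraph G I₁).componentRep v)) :=
    (reachable_componentRep v).eq_of_forall_adj (f := fun w => xor (label I₁ w) (label I₂ w))
      fun _ _ huw => (xor_eq_xor_iff_xor_eq_xor _ _ _ _).mp <|
        (label_xor_label_of_adj h₁ huw).trans (label_xor_label_of_adj h₂ (hgraph ▸ huw)).symm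
  rw [alignment, alignment, ← hgraph]
  exact (xor_eq_xor_iff_xor_eq_xor _ _ _ _).mp key

lemma align_injOn : Set.InjOn (align G) {I | (twoLift G s hs).IsIndepSet I} := by
  intro I₁ h₁ I₂ h₂ h
  calc I₁ = (align G I₁).map (relabel (alignment G I₁)).toEmbedding :=
        (map_relabel_map_relabel _ _).symm
    _ = (align G I₂).map (relabel (alignment G I₂)).toEmbedding := by
        rw [h, alignment_eq_of_align_eq h₁ h₂ h]
    _ = I₂ := map_relabel_map_relabel _ _

end Lift

end TwoLift

open TwoLift in
theorem independent_sets_of_two_lift_le {V : Type} [Fintype V] (G : SimpleGraph V)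
    (s : V → V → Bool) (hs : ∀ u v, s u v = s v u) (k : ℕ) :
    indepCount (twoLift G s hs) k ≤ indepCount (doubleCover G) k := by
  refine Nat.card_le_card_of_injective
    (fun I => ⟨align G I.1, (Finset.card_map _).trans I.2.1, isIndepSet_align I.2.2⟩) ?_
  intro ⟨I₁, _, h₁⟩ ⟨I₂, _, h₂⟩ hI
  exact Subtype.ext (align_injOn h₁ h₂ (congrArg Subtype.val hI))
end

section
/- Let A be a nonnegative symmetric q × q real matrix that is TP₂ (every 2 × 2 minor of A is nonnegative). Then for any finite graph G and any 2-lift H of G, we have Z(G,A)² ≥ Z(H,A), where Z(G,A) = Σ_{φ:V(G)→[q]} Π_{(u,v)∈E(G)} a_{φ(u),φ(v)}. -/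
open scoped Classical

/-- The homomorphism partition function `Z(G,A) = Σ_φ Π_{(u,v)∈E(G)} A (φ u) (φ v)`.
(Each edge is an unordered pair; for symmetric `A` the choice of representative is immaterial.) -/
noncomputable def Z {V ι : Type} [Fintype V] [Fintype ι] (G : SimpleGraph V)
    (A : Matrix ι ι ℝ) : ℝ :=
  ∑ φ : V → ι, ∏ e ∈ G.edgeFinset,
    A (φ (Quot.out e).1) (φ (Quot.out e).2)

open Finset

/-!
A configuration of a 2-lift is a map `ψ : V × Bool → ι`, i.e. a pair of configurations of `G`, one
on each sheet. Both `Z(H)` and `Z(G)² = Z(G ⊔ G)` are sums over `ψ` of products over the edges `uv`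
of `G` of the weight of the two lifts of `uv`: the parallel weight `P` for `G ⊔ G`, and for `H` the
parallel or the crossing weight `C` according to `s u v`. Flipping the sheets over the vertices of
`δ : V → Bool` permutes the `ψ` and turns the sign `b` of `uv` into `b ⊕ δ u ⊕ δ v`, so it suffices
to compare the two sums averaged over all flips, and there we may assume that `ψ` is sorted:
`ψ (v, false) ≤ ψ (v, true)`. Then TP₂ gives `0 ≤ C ≤ P` on every edge, and the averaged sum is an
Ising partition function with couplings `±(P - C)/2`. Expanding the product over edges, each term is
a nonnegative coefficient times a nonnegative character sum times a sign, and all signs are `+`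
exactly when every edge is parallel.
-/

noncomputable def boolSign (b : Bool) : ℝ := if b then -1 else 1

lemma boolSign_xor (a b : Bool) : boolSign (xor a b) = boolSign a * boolSign b := by
  cases a <;> cases b <;> norm_num [boolSign]

lemma abs_boolSign (b : Bool) : |boolSign b| = 1 := by
  cases b <;> norm_num [boolSign]

lemma eq_boolSign_mul_add (f : Bool → ℝ) (b : Bool) :
    f b = boolSign b * ((f false - f true) / 2) + (f false + f true) / 2 := by
  cases b <;> norm_num [boolSign] <;> ring

lemma sum_nonneg_of_map_xor {V : Type*} [Fintype V] (h : (V → Bool) → ℝ)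
    (hmul : ∀ ε δ : V → Bool, h (fun v => xor (ε v) (δ v)) = h ε * h δ) :
    0 ≤ ∑ ε, h ε := by
  set S := ∑ ε, h ε
  -- `S` is invariant under translation by `δ`, so `S * h δ = S`; summing over `δ`, `S² = 2^|V| S`.
  have hfix : ∀ δ, S * h δ = S := fun δ => by
    rw [Finset.sum_mul]
    simp_rw [← hmul]
    exact Fintype.sum_equiv (Function.Involutive.toPerm (fun ε v => xor (ε v) (δ v))
      fun ε => by simp) _ _ fun _ => rfl
  have hsq : S * S = Fintype.card (V → Bool) * S := by
    rw [Finset.mul_sum]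
    simp_rw [hfix]
    simp
  have hcard : (0 : ℝ) < Fintype.card (V → Bool) := by exact_mod_cast Fintype.card_pos
  nlinarith [mul_self_nonneg S]

section Ising

variable {V ι : Type*} [Fintype V] (E : Finset ι) (src tgt : ι → V)

lemma sum_prod_boolSign_xor_nonneg :
    0 ≤ ∑ ε : V → Bool, ∏ i ∈ E, boolSign (xor (ε (src i)) (ε (tgt i))) := by
  refine sum_nonneg_of_map_xor _ fun ε δ => ?_
  rw [← Finset.prod_mul_distrib]
  refine Finset.prod_congr rfl fun i _ => ?_
  rw [← boolSign_xor]
  congr 1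
  simp only [Bool.xor_assoc, Bool.xor_left_comm]

variable (w : ι → Bool → ℝ)

lemma sum_prod_xor_eq (σ : ι → Bool) :
    ∑ ε : V → Bool, ∏ i ∈ E, w i (xor (xor (ε (src i)) (ε (tgt i))) (σ i)) =
      ∑ t ∈ E.powerset, (∏ i ∈ t, boolSign (σ i)) *
        ((∏ i ∈ t, (w i false - w i true) / 2) * (∏ i ∈ E \ t, (w i false + w i true) / 2) *
          ∑ ε : V → Bool, ∏ i ∈ t, boolSign (xor (ε (src i)) (ε (tgt i)))) := by
  have hexpand : ∀ (ε : V → Bool) i, w i (xor (xor (ε (src i)) (ε (tgt i))) (σ i)) =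
      boolSign (xor (ε (src i)) (ε (tgt i))) * boolSign (σ i) * ((w i false - w i true) / 2) +
        (w i false + w i true) / 2 := fun ε i => by
    rw [eq_boolSign_mul_add (w i), boolSign_xor]
  simp_rw [hexpand, Finset.prod_add]
  rw [Finset.sum_comm]
  refine Finset.sum_congr rfl fun t _ => ?_
  simp_rw [Finset.prod_mul_distrib, Finset.mul_sum]
  refine Finset.sum_congr rfl fun ε _ => ?_
  ring

lemma sum_prod_xor_le (hw : ∀ i ∈ E, |w i true| ≤ w i false) (σ : ι → Bool) :
    ∑ ε : V → Bool, ∏ i ∈ E, w i (xor (xor (ε (src i)) (ε (tgt i))) (σ i)) ≤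
      ∑ ε : V → Bool, ∏ i ∈ E, w i (xor (xor (ε (src i)) (ε (tgt i))) false) := by
  rw [sum_prod_xor_eq, sum_prod_xor_eq]
  refine Finset.sum_le_sum fun t ht => ?_
  have hsign : ∏ i ∈ t, boolSign (σ i) ≤ 1 := by
    refine (le_abs_self _).trans_eq ?_
    simp only [Finset.abs_prod, abs_boolSign, Finset.prod_const_one]
  have hdiff : 0 ≤ ∏ i ∈ t, (w i false - w i true) / 2 := Finset.prod_nonneg fun i hi => by
    linarith [le_abs_self (w i true), hw i (Finset.mem_powerset.mp ht hi)]
  have havg : 0 ≤ ∏ i ∈ E \ t, (w i false + w i true) / 2 := Finset.prod_nonneg fun i hi => by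
    linarith [neg_abs_le (w i true), hw i (Finset.mem_sdiff.mp hi).1]
  have hK := sum_prod_boolSign_xor_nonneg t src tgt
  rw [show ∏ i ∈ t, boolSign false = 1 by simp [boolSign], one_mul]
  exact mul_le_of_le_one_left (mul_nonneg (mul_nonneg hdiff havg) hK) hsign

end Ising

lemma Sym2.mk_quot_out {α : Type*} (e : Sym2 α) : s((Quot.out e).1, (Quot.out e).2) = e :=
  Quot.out_eq e

lemma SimpleGraph.adj_quot_out {W : Type*} {G : SimpleGraph W} {e : Sym2 W}
    (he : e ∈ G.edgeSet) : G.Adj (Quot.out e).1 (Quot.out e).2 := by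
  rwa [← Sym2.mk_quot_out e] at he

lemma Sym2.lift_eq_quot_out {α β : Type*} (F : {f : α → α → β // ∀ a b, f a b = f b a})
    (e : Sym2 α) : Sym2.lift F e = F.1 (Quot.out e).1 (Quot.out e).2 := by
  rw [← Sym2.lift_mk, Sym2.mk_quot_out]

section TwoLift

variable {V : Type} {G : SimpleGraph V} {s : V → V → Bool} {hs : ∀ u v, s u v = s v u}

lemma twoLift_adj {a b : V × Bool} :
    (twoLift G s hs).Adj a b ↔ G.Adj a.1 b.1 ∧ xor a.2 b.2 = s a.1 b.1 := Iff.rfl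

lemma twoLift_edgeFinset_filter_map_fst [Fintype V] {u v : V} (huv : G.Adj u v) :
    {f ∈ (twoLift G s hs).edgeFinset | Sym2.map Prod.fst f = s(u, v)} =
      univ.image fun c => s((u, c), (v, xor c (s u v))) := by
  ext f
  induction f using Sym2.ind with
  | h a b =>
    obtain ⟨a, i⟩ := a
    obtain ⟨b, j⟩ := b
    simp only [mem_filter, SimpleGraph.mem_edgeFinset, SimpleGraph.mem_edgeSet, twoLift_adj,
      Sym2.map_mk, Sym2.eq_iff, Prod.mk.injEq, mem_image, mem_univ, true_and]
    constructor
    · rintro ⟨⟨-, hij⟩, ⟨rfl, rfl⟩ | ⟨rfl, rfl⟩⟩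
      · exact ⟨i, Or.inl ⟨⟨rfl, rfl⟩, rfl, by rw [← hij]; cases i <;> cases j <;> rfl⟩⟩
      · exact ⟨j, Or.inr ⟨⟨rfl, rfl⟩, rfl, by rw [hs, ← hij]; cases i <;> cases j <;> rfl⟩⟩
    · rintro ⟨c, ⟨⟨rfl, rfl⟩, rfl, rfl⟩ | ⟨⟨rfl, rfl⟩, rfl, rfl⟩⟩
      · exact ⟨⟨huv, by simp⟩, Or.inl ⟨rfl, rfl⟩⟩
      · exact ⟨⟨huv.symm, by rw [hs v u]; cases c <;> simp⟩, Or.inr ⟨rfl, rfl⟩⟩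

lemma prod_edgeFinset_twoLift [Fintype V] {M : Type*} [CommMonoid M] (F : Sym2 (V × Bool) → M) :
    ∏ f ∈ (twoLift G s hs).edgeFinset, F f =
      ∏ e ∈ G.edgeFinset, ∏ c : Bool,
        F s(((Quot.out e).1, c), ((Quot.out e).2, xor c (s (Quot.out e).1 (Quot.out e).2))) := by
  rw [← prod_fiberwise_of_maps_to (g := Sym2.map Prod.fst) fun f hf => ?_]
  · refine prod_congr rfl fun e he => ?_
    have huv := SimpleGraph.adj_quot_out (SimpleGraph.mem_edgeFinset.mp he)
    conv_lhs => rw [← Sym2.mk_quot_out e]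
    rw [twoLift_edgeFinset_filter_map_fst huv, prod_image fun c _ c' _ h => ?_]
    rcases Sym2.eq_iff.mp h with ⟨h1, -⟩ | ⟨h1, -⟩
    · exact (Prod.mk.inj h1).2
    · exact absurd (Prod.mk.inj h1).1 huv.ne
  · induction f using Sym2.ind with
    | h a b => exact SimpleGraph.mem_edgeFinset.mpr (SimpleGraph.mem_edgeFinset.mp hf).1

end TwoLift

section Sheets

variable {V ι : Type*}

def flipSheets (δ : V → Bool) (p : V × Bool) : V × Bool := (p.1, xor p.2 (δ p.1))

lemma flipSheets_involutive (δ : V → Bool) : Function.Involutive (flipSheets δ) := fun p => by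
  simp [flipSheets]

lemma flipSheets_comp_flipSheets (δ δ' : V → Bool) :
    flipSheets δ ∘ flipSheets δ' = flipSheets fun v => xor (δ v) (δ' v) := by
  funext p
  simp [flipSheets, Bool.xor_comm (δ' p.1)]

lemma exists_sorted_comp_flipSheets [LinearOrder ι] (ψ : V × Bool → ι) :
    ∃ φ δ, ψ = φ ∘ flipSheets δ ∧ ∀ v, φ (v, false) ≤ φ (v, true) := by
  set δ := fun v => decide (ψ (v, true) < ψ (v, false))
  refine ⟨ψ ∘ flipSheets δ, δ, by rw [Function.comp_assoc, (flipSheets_involutive δ).comp_self,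
    Function.comp_id], fun v => ?_⟩
  by_cases h : ψ (v, true) < ψ (v, false) <;> simp [δ, flipSheets, h, le_of_lt, not_lt.mp]

lemma sum_comp_flipSheets_comp [Fintype V] {M : Type*} [AddCommMonoid M] (F : (V × Bool → ι) → M)
    (ψ : V × Bool → ι) (δ₀ : V → Bool) :
    ∑ δ, F ((ψ ∘ flipSheets δ₀) ∘ flipSheets δ) = ∑ δ, F (ψ ∘ flipSheets δ) := by
  simp_rw [Function.comp_assoc, flipSheets_comp_flipSheets]
  exact Function.Involutive.bijective (f := fun δ v => xor (δ₀ v) (δ v)) (fun δ => by simp)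
    |>.sum_comp fun δ => F (ψ ∘ flipSheets δ)

def liftedEdgeWeight (A : Matrix ι ι ℝ) (ψ : V × Bool → ι) (u v : V) (b : Bool) : ℝ :=
  ∏ c : Bool, A (ψ (u, c)) (ψ (v, xor c b))

lemma liftedEdgeWeight_comp_flipSheets (A : Matrix ι ι ℝ) (ψ : V × Bool → ι) (δ : V → Bool)
    (u v : V) (b : Bool) :
    liftedEdgeWeight A (ψ ∘ flipSheets δ) u v b =
      liftedEdgeWeight A ψ u v (xor (xor (δ u) (δ v)) b) := by
  refine Fintype.prod_equiv (Function.Involutive.toPerm (xor · (δ u)) fun c => by simp) _ _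
    fun c => ?_
  simp only [Function.comp_apply, flipSheets]
  cases c <;> cases b <;> cases δ u <;> cases δ v <;> rfl

lemma tp2_antidiag_le_diag [LinearOrder ι] {A : Matrix ι ι ℝ}
    (hTP : ∀ i j r s : ι, i < j → r < s → 0 ≤ A i r * A j s - A i s * A j r)
    {i j r s : ι} (hij : i ≤ j) (hrs : r ≤ s) : A i s * A j r ≤ A i r * A j s := by
  rcases hij.eq_or_lt with rfl | hij
  · rw [mul_comm]
  rcases hrs.eq_or_lt with rfl | hrs
  · rfl
  linarith [hTP i j r s hij hrs]

lemma abs_liftedEdgeWeight_true_le [LinearOrder ι] {A : Matrix ι ι ℝ} (hnn : ∀ i j, 0 ≤ A i j)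
    (hTP : ∀ i j r s : ι, i < j → r < s → 0 ≤ A i r * A j s - A i s * A j r)
    {ψ : V × Bool → ι} (hψ : ∀ v, ψ (v, false) ≤ ψ (v, true)) (u v : V) :
    |liftedEdgeWeight A ψ u v true| ≤ liftedEdgeWeight A ψ u v false := by
  simp only [liftedEdgeWeight, Fintype.prod_bool, Bool.true_xor, Bool.false_xor, Bool.not_true,
    Bool.xor_false]
  rw [abs_of_nonneg (mul_nonneg (hnn _ _) (hnn _ _)), mul_comm (A (ψ (u, true)) _),
    mul_comm (A (ψ (u, true)) _)]
  exact tp2_antidiag_le_diag hTP (hψ u) (hψ v)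

end Sheets

lemma sum_le_sum_of_sum_comp_le {α β : Type*} [Fintype α] [Fintype β] [Nonempty β]
    {π : β → α → α} (hπ : ∀ b, (π b).Bijective) {f g : α → ℝ}
    (h : ∀ a, ∑ b, f (π b a) ≤ ∑ b, g (π b a)) : ∑ a, f a ≤ ∑ a, g a := by
  have hsum : ∀ F : α → ℝ, ∑ a, ∑ b, F (π b a) = Fintype.card β * ∑ a, F a := fun F => by
    rw [Finset.sum_comm]
    simp_rw [(hπ _).sum_comp F]
    simp
  have := Finset.sum_le_sum fun a (_ : a ∈ Finset.univ) => h a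
  rw [hsum, hsum] at this
  exact le_of_mul_le_mul_left this (by exact_mod_cast Fintype.card_pos)

section PartitionFunction

variable {V ι : Type} [Fintype V] [Fintype ι]

noncomputable def liftedWeight (A : Matrix ι ι ℝ) (G : SimpleGraph V) (σ : V → V → Bool)
    (ψ : V × Bool → ι) : ℝ :=
  ∏ e ∈ G.edgeFinset,
    liftedEdgeWeight A ψ (Quot.out e).1 (Quot.out e).2 (σ (Quot.out e).1 (Quot.out e).2)

lemma Z_twoLift_eq {A : Matrix ι ι ℝ} (hA : A.IsSymm) (G : SimpleGraph V) (s : V → V → Bool)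
    (hs : ∀ u v, s u v = s v u) :
    Z (twoLift G s hs) A = ∑ ψ, liftedWeight A G s ψ := by
  unfold Z
  congr 1
  -- the two `univ`s differ in their `DecidableEq (V × Bool)` instance (classical vs. `Prod`)
  · congr; exact Subsingleton.elim _ _
  funext ψ
  let F : {f : V × Bool → V × Bool → ℝ // ∀ a b, f a b = f b a} :=
    ⟨fun a b => A (ψ a) (ψ b), fun a b => hA.apply (ψ b) (ψ a)⟩
  calc ∏ f ∈ (twoLift G s hs).edgeFinset, A (ψ (Quot.out f).1) (ψ (Quot.out f).2)
      = ∏ f ∈ (twoLift G s hs).edgeFinset, Sym2.lift F f := by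
        simp only [Sym2.lift_eq_quot_out, F]
    _ = liftedWeight A G s ψ := by
        simp only [prod_edgeFinset_twoLift, Sym2.lift_mk, F]
        rfl

lemma sq_sum_eq_sum_prod_sheets {M : Type*} [CommSemiring M] (w : (V → ι) → M) :
    (∑ x, w x) ^ 2 = ∑ ψ : V × Bool → ι, ∏ c, w fun v => ψ (v, c) := by
  rw [sq, ← Fintype.prod_bool (fun _ => ∑ x, w x), Fintype.prod_sum]
  exact (Fintype.sum_equiv (((Equiv.prodComm V Bool).arrowCongr (Equiv.refl ι)).trans
    (Equiv.curry Bool V ι)) _ _ fun ψ => rfl).symm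

lemma sq_Z_eq (A : Matrix ι ι ℝ) (G : SimpleGraph V) :
    Z G A ^ 2 = ∑ ψ, liftedWeight A G (fun _ _ => false) ψ := by
  rw [Z, sq_sum_eq_sum_prod_sheets]
  refine Finset.sum_congr rfl fun ψ _ => ?_
  simp only [liftedWeight, liftedEdgeWeight, Bool.xor_false]
  exact Finset.prod_comm

end PartitionFunction

theorem TP2_two_lift {q : ℕ} (A : Matrix (Fin q) (Fin q) ℝ)
    (hnn : ∀ i j, 0 ≤ A i j) (hsymm : A.IsSymm)
    (hTP : ∀ i j r s : Fin q, i < j → r < s → 0 ≤ A i r * A j s - A i s * A j r)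
    {V : Type} [Fintype V] (G : SimpleGraph V)
    (s : V → V → Bool) (hs : ∀ u v, s u v = s v u) :
    Z (twoLift G s hs) A ≤ (Z G A) ^ 2 := by
  rw [Z_twoLift_eq hsymm, sq_Z_eq]
  refine sum_le_sum_of_sum_comp_le (π := fun δ ψ => ψ ∘ flipSheets δ)
    (fun δ => (flipSheets_involutive δ).bijective.comp_right) fun ψ => ?_
  obtain ⟨φ, δ₀, rfl, hφ⟩ := exists_sorted_comp_flipSheets ψ
  rw [sum_comp_flipSheets_comp (liftedWeight A G s), sum_comp_flipSheets_comp]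
  simp only [liftedWeight, liftedEdgeWeight_comp_flipSheets]
  exact sum_prod_xor_le _ _ _ _ (fun e _ => abs_liftedEdgeWeight_true_le hnn hTP hφ _ _) _
end

section
/- For the random cluster model with q ≥ 1 and w ≥ 0 on a multigraph H with two distinct edges e and f, we have Z(H−{e,f},q,w) · Z(H/{e,f},q,w) ≥ Z((H−e)/f,q,w) · Z((H/e)−f,q,w). -/
/-!
The number of components `k(F)` is supermodular in `F`: an edge lowers `k` by one exactly when
its endpoints are not yet connected, and that becomes rarer as the edge set grows. Hence for
`q ≥ 1`, `w ≥ 0` the random cluster weights `q ^ k(F) * w ^ |F|` satisfy the lattice condition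
of the Ahlswede–Daykin four functions theorem on subsets of `E \ {e, f}`, once `f` is added to
the sets on one side and `e` to those on the other.
-/
open scoped Classical

/-- The number of connected components of the spanning subgraph of a multigraph
(with vertex set `V`, edges indexed by `E` with endpoints `ends`) using the edges in `F`.
Isolated vertices count as components; loops and parallel edges are allowed (they do
not affect the component structure). -/
noncomputable def kcomp {V E : Type} [Fintype V] (ends : E → Sym2 V) (F : Finset E) : ℕ :=
  Nat.card (SimpleGraph.fromEdgeSet (↑(F.image ends) : Set (Sym2 V))).ConnectedComponent

namespace SimpleGraph

variable {V : Type*} {G H : SimpleGraph V} {u v : V}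

theorem Reachable.of_sup_edge {x y : V} (h : (G ⊔ edge u v).Reachable x y) :
    G.Reachable x y ∨ (G.Reachable x u ∧ G.Reachable v y) ∨
      (G.Reachable x v ∧ G.Reachable u y) := by
  obtain ⟨p⟩ := h
  induction p with
  | nil => exact .inl .rfl
  | @cons x b y hadj p ih =>
    rw [sup_adj, edge_adj] at hadj
    rcases hadj with hG | ⟨⟨rfl, rfl⟩ | ⟨rfl, rfl⟩, -⟩
    · exact ih.imp hG.reachable.trans
        (Or.imp (.imp_left hG.reachable.trans) (.imp_left hG.reachable.trans))
    · rcases ih with h | ⟨-, h⟩ | ⟨-, h⟩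
      · exact .inr (.inl ⟨.rfl, h⟩)
      · exact .inr (.inl ⟨.rfl, h⟩)
      · exact .inl h
    · rcases ih with h | ⟨-, h⟩ | ⟨-, h⟩
      · exact .inr (.inr ⟨.rfl, h⟩)
      · exact .inl h
      · exact .inr (.inr ⟨.rfl, h⟩)

namespace ConnectedComponent

theorem eq_or_of_map_ofLE_sup_edge_eq {c d : G.ConnectedComponent}
    (h : c.map (Hom.ofLE (le_sup_left : G ≤ G ⊔ edge u v)) =
      d.map (Hom.ofLE le_sup_left)) :
    c = d ∨ (c = G.connectedComponentMk u ∧ d = G.connectedComponentMk v) ∨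
      (c = G.connectedComponentMk v ∧ d = G.connectedComponentMk u) := by
  induction c using ConnectedComponent.ind with | h x => ?_
  induction d using ConnectedComponent.ind with | h y => ?_
  rw [map_mk, map_mk, ConnectedComponent.eq] at h
  rcases h.of_sup_edge with h | ⟨hx, hy⟩ | ⟨hx, hy⟩
  · exact .inl (ConnectedComponent.sound h)
  · exact .inr (.inl ⟨ConnectedComponent.sound hx, ConnectedComponent.sound hy.symm⟩)
  · exact .inr (.inr ⟨ConnectedComponent.sound hx, ConnectedComponent.sound hy.symm⟩)

end ConnectedComponent

open ConnectedComponent in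
theorem card_connectedComponent_sup_edge_of_reachable [Finite V] (h : G.Reachable u v) :
    Nat.card (G ⊔ edge u v).ConnectedComponent = Nat.card G.ConnectedComponent := by
  refine (Nat.card_eq_of_bijective _ ⟨fun c d hcd => ?_, surjective_map_ofLE le_sup_left⟩).symm
  rcases eq_or_of_map_ofLE_sup_edge_eq hcd with hcd | ⟨rfl, rfl⟩ | ⟨rfl, rfl⟩
  exacts [hcd, ConnectedComponent.sound h, ConnectedComponent.sound h.symm]

open ConnectedComponent in
theorem card_connectedComponent_sup_edge_add_one [Finite V] (h : ¬G.Reachable u v) :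
    Nat.card (G ⊔ edge u v).ConnectedComponent + 1 = Nat.card G.ConnectedComponent := by
  -- the map on components is a bijection once the component of `v` is removed
  set φ := map (Hom.ofLE (le_sup_left : G ≤ G ⊔ edge u v))
  have hinj : Set.InjOn φ {G.connectedComponentMk v}ᶜ := fun c hc d hd hcd => by
    rcases eq_or_of_map_ofLE_sup_edge_eq hcd with hcd | ⟨-, rfl⟩ | ⟨rfl, -⟩
    exacts [hcd, absurd rfl hd, absurd rfl hc]
  have himage : φ '' {G.connectedComponentMk v}ᶜ = Set.univ := by
    refine Set.eq_univ_of_forall fun c => ?_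
    obtain ⟨d, rfl⟩ := surjective_map_ofLE le_sup_left c
    by_cases hd : d = G.connectedComponentMk v
    · refine ⟨G.connectedComponentMk u, fun hu => h (ConnectedComponent.exact hu), ?_⟩
      subst hd
      have hadj : (G ⊔ edge u v).Adj u v :=
        .inr ((edge_adj ..).2 ⟨.inl ⟨rfl, rfl⟩, fun huv => h (huv ▸ .rfl)⟩)
      exact ConnectedComponent.sound hadj.reachable
    · exact ⟨d, hd, rfl⟩
  rw [← Set.ncard_compl_add_ncard {G.connectedComponentMk v}, Set.ncard_singleton,
    ← hinj.ncard_image, himage, Set.ncard_univ]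

theorem card_connectedComponent_le_sup_edge_add_one [Finite V] (G : SimpleGraph V) (u v : V) :
    Nat.card G.ConnectedComponent ≤ Nat.card (G ⊔ edge u v).ConnectedComponent + 1 := by
  by_cases h : G.Reachable u v
  · rw [card_connectedComponent_sup_edge_of_reachable h]
    exact Nat.le_succ _
  · rw [card_connectedComponent_sup_edge_add_one h]

theorem card_connectedComponent_sup_edge_add_le [Finite V] (hGH : G ≤ H) (u v : V) :
    Nat.card (G ⊔ edge u v).ConnectedComponent + Nat.card H.ConnectedComponent ≤
      Nat.card G.ConnectedComponent + Nat.card (H ⊔ edge u v).ConnectedComponent := by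
  by_cases hG : G.Reachable u v
  · rw [card_connectedComponent_sup_edge_of_reachable hG,
      card_connectedComponent_sup_edge_of_reachable (hG.mono hGH)]
  · rw [← card_connectedComponent_sup_edge_add_one hG]
    have := H.card_connectedComponent_le_sup_edge_add_one u v
    omega

end SimpleGraph

section ComponentCount

open SimpleGraph

variable {V E : Type} [Fintype V] (ends : E → Sym2 V)

theorem kcomp_insert_add_le {A B : Finset E} (hAB : A ⊆ B) (g : E) :
    kcomp ends (insert g A) + kcomp ends B ≤ kcomp ends A + kcomp ends (insert g B) := by
  obtain ⟨u, v, huv⟩ : ∃ u v, ends g = s(u, v) := Sym2.ind (fun u v => ⟨u, v, rfl⟩) (ends g)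
  have hinsert (F : Finset E) : fromEdgeSet (↑((insert g F).image ends) : Set (Sym2 V)) =
      fromEdgeSet (↑(F.image ends) : Set (Sym2 V)) ⊔ edge u v := by
    rw [Finset.image_insert, Finset.coe_insert, Set.insert_eq, fromEdgeSet_union, sup_comm, huv,
      edge]
  simp only [kcomp, hinsert]
  exact card_connectedComponent_sup_edge_add_le
    (fromEdgeSet_mono (by exact_mod_cast Finset.image_subset_image (f := ends) hAB)) u v

theorem kcomp_union_add_le {A B : Finset E} (hAB : A ⊆ B) (C : Finset E) :
    kcomp ends (A ∪ C) + kcomp ends B ≤ kcomp ends A + kcomp ends (B ∪ C) := by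
  induction C using Finset.induction_on with
  | empty => simp only [Finset.union_empty, le_refl]
  | insert g C _ ih =>
    rw [Finset.union_insert, Finset.union_insert]
    have := kcomp_insert_add_le ends (Finset.union_subset_union_left hAB (t := C)) g
    omega

theorem kcomp_add_kcomp_le_inter_add_union (X Y : Finset E) :
    kcomp ends X + kcomp ends Y ≤ kcomp ends (X ∩ Y) + kcomp ends (X ∪ Y) := by
  have := kcomp_union_add_le ends (Finset.inter_subset_right : X ∩ Y ⊆ Y) X
  rwa [Finset.union_eq_right.2 Finset.inter_subset_left, Finset.union_comm Y X] at this

end ComponentCount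

section ClusterWeight

variable {E : Type} {q w : ℝ}

def clusterWeight (k : Finset E → ℕ) (q w : ℝ) (F : Finset E) : ℝ := q ^ k F * w ^ F.card

theorem clusterWeight_nonneg (k : Finset E → ℕ) (hq : 0 ≤ q) (hw : 0 ≤ w) :
    0 ≤ clusterWeight k q w := fun F => by unfold clusterWeight; positivity

variable [DecidableEq E] {k₁ k₂ k₃ k₄ : Finset E → ℕ}

theorem clusterWeight_mul_le (hq : 1 ≤ q) (hw : 0 ≤ w) {s t : Finset E}
    (h : k₁ s + k₂ t ≤ k₃ (s ∩ t) + k₄ (s ∪ t)) :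
    clusterWeight k₁ q w s * clusterWeight k₂ q w t ≤
      clusterWeight k₃ q w (s ∩ t) * clusterWeight k₄ q w (s ∪ t) := calc
  _ = q ^ (k₁ s + k₂ t) * w ^ (s.card + t.card) := by
    simp only [clusterWeight]; ring
  _ ≤ q ^ (k₃ (s ∩ t) + k₄ (s ∪ t)) * w ^ ((s ∩ t).card + (s ∪ t).card) := by
    rw [Finset.card_inter_add_card_union]; gcongr
  _ = _ := by simp only [clusterWeight]; ring

theorem sum_clusterWeight_mul_le (u : Finset E) (hq : 1 ≤ q) (hw : 0 ≤ w)
    (h : ∀ s ⊆ u, ∀ t ⊆ u, k₁ s + k₂ t ≤ k₃ (s ∩ t) + k₄ (s ∪ t)) :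
    (∑ s ∈ u.powerset, clusterWeight k₁ q w s) * ∑ s ∈ u.powerset, clusterWeight k₂ q w s ≤
      (∑ s ∈ u.powerset, clusterWeight k₃ q w s) * ∑ s ∈ u.powerset, clusterWeight k₄ q w s := by
  have hq₀ : 0 ≤ q := zero_le_one.trans hq
  simpa only [Finset.powerset_infs_powerset_self, Finset.powerset_sups_powerset_self] using
    u.four_functions_theorem (clusterWeight_nonneg k₁ hq₀ hw) (clusterWeight_nonneg k₂ hq₀ hw)
      (clusterWeight_nonneg k₃ hq₀ hw) (clusterWeight_nonneg k₄ hq₀ hw)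
      (fun s hs t ht => clusterWeight_mul_le hq hw (h s hs t ht)) subset_rfl subset_rfl

end ClusterWeight

/-- FKG inequality for the random cluster model, rewritten via deletion–contraction:
`Z(H−{e,f}) · Z(H/{e,f}) ≥ Z((H−e)/f) · Z((H/e)−f)` for `q ≥ 1`, `w ≥ 0`.
Deleting an edge restricts the sum to subsets avoiding it; contracting an edge `e`
amounts to counting components of `F ∪ {e}` while not charging `e` a factor `w`. -/
theorem randomCluster_FKG_deletion_contraction {V E : Type} [Fintype V] [Fintype E]
    (ends : E → Sym2 V) (e f : E) (hef : e ≠ f) (q w : ℝ) (hq : 1 ≤ q) (hw : 0 ≤ w) :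
    (∑ F ∈ ((Finset.univ : Finset E) \ {e, f}).powerset,
        q ^ kcomp ends F * w ^ F.card) *
      (∑ F ∈ ((Finset.univ : Finset E) \ {e, f}).powerset,
        q ^ kcomp ends (F ∪ {e, f}) * w ^ F.card)
    ≥ (∑ F ∈ ((Finset.univ : Finset E) \ {e, f}).powerset,
        q ^ kcomp ends (F ∪ {f}) * w ^ F.card) *
      (∑ F ∈ ((Finset.univ : Finset E) \ {e, f}).powerset,
        q ^ kcomp ends (F ∪ {e}) * w ^ F.card) := by
  refine sum_clusterWeight_mul_le (k₁ := fun F => kcomp ends (F ∪ {f}))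
    (k₂ := fun F => kcomp ends (F ∪ {e})) (k₃ := kcomp ends)
    (k₄ := fun F => kcomp ends (F ∪ {e, f})) _ hq hw fun s hs t ht => ?_
  have hinter : (s ∪ {f}) ∩ (t ∪ {e}) = s ∩ t := by grind
  have hunion : (s ∪ {f}) ∪ (t ∪ {e}) = s ∪ t ∪ {e, f} := by grind
  simpa only [hinter, hunion] using kcomp_add_kcomp_le_inter_add_union ends (s ∪ {f}) (t ∪ {e})
end

section
/- Let G be a finite graph and for each edge e let A(e) be a nonnegative 2×2 matrix with det A(e) ≤ 0, and define f_e as above. Then for any sign assignment s ∈ {−1,1}^{E(G)}, Σ_{σ ∈ {−1,1}^{V(G)}} Π_{(u,v)∈E(G)} f_e(s_{uv} σ_u σ_v) ≤ Σ_{σ ∈ {−1,1}^{V(G)}} Π_{(u,v)∈E(G)} f_e(−σ_u σ_v). -/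
/-! Write `f_e(x) = c₁(e) + x c₂(e)` for `x = ±1`; nonnegative entries give `c₁ ≥ 0` and
`det A(e) ≤ 0` gives `c₂ ≤ 0`. Both sides have the form `Σ_σ Π_e (c₁(e) + σ_u σ_v t_e)`, with
`t_e = s_e c₂(e)` on the left and `t_e = -c₂(e) = |s_e c₂(e)|` on the right. Expanding the
product gives `Σ_F Π_{e ∈ F} t_e Π_{e ∉ F} c₁(e) Σ_σ Π_{e ∈ F} σ_u σ_v`, and the inner sum is the
sum of a character of the group `{±1}^V`, hence `0` or `2^|V|`. All coefficients of the monomials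
`Π_{e ∈ F} t_e` are therefore nonnegative, so the expression can only grow when each `t_e` is
replaced by `|t_e|`. -/

open scoped Classical

/-- The edge function `f_e : {−1,1} → ℝ` associated to the 2×2 matrix `a e`,
with the sign `+1` encoded by `true` and `−1` by `false`:
`f_e(+1) = a₁₁(e)a₂₂(e)` and `f_e(−1) = a₁₂(e)a₂₁(e)`. -/
def fe {V : Type} (a : Sym2 V → Matrix (Fin 2) (Fin 2) ℝ) (e : Sym2 V) (b : Bool) : ℝ :=
  if b then a e 0 0 * a e 1 1 else a e 0 1 * a e 1 0

/-- The sign `σ_u σ_v ∈ {−1,1}` of an edge, encoded as a Bool (`true` = `+1`):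
it is `+1` exactly when the endpoint signs agree. -/
noncomputable def edgeSign {V : Type} (σ : V → Bool) (e : Sym2 V) : Bool :=
  σ (Quot.out e).1 == σ (Quot.out e).2

open Finset

theorem Finset.sum_prod_add_mul_eq {ι X R : Type*} [Fintype X] [CommSemiring R]
    (E : Finset ι) (χ : X → ι → R) (c t : ι → R) :
    ∑ x, ∏ e ∈ E, (c e + χ x e * t e) =
      ∑ F ∈ E.powerset, (∏ e ∈ F, t e) * (∏ e ∈ E \ F, c e) * ∑ x, ∏ e ∈ F, χ x e := by
  simp_rw [add_comm (c _), prod_add, mul_sum, prod_mul_distrib]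
  rw [sum_comm]
  exact sum_congr rfl fun F _ => sum_congr rfl fun x _ => by ring

namespace AddChar

theorem sum_nonneg {A R : Type*} [AddGroup A] [Fintype A] [CommSemiring R] [IsDomain R]
    [PartialOrder R] [IsOrderedRing R] (ψ : AddChar A R) : 0 ≤ ∑ a, ψ a := by
  rw [ψ.sum_eq_ite]
  split_ifs <;> positivity

theorem sum_prod_add_mul_le {ι A R : Type*} [AddGroup A] [Fintype A] [CommRing R]
    [LinearOrder R] [IsStrictOrderedRing R] (E : Finset ι) (ψ : ι → AddChar A R)
    {c t t' : ι → R} (hc : ∀ e ∈ E, 0 ≤ c e) (ht : ∀ e ∈ E, |t e| ≤ t' e) :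
    ∑ a, ∏ e ∈ E, (c e + ψ e a * t e) ≤ ∑ a, ∏ e ∈ E, (c e + ψ e a * t' e) := by
  rw [sum_prod_add_mul_eq, sum_prod_add_mul_eq]
  refine sum_le_sum fun F hF => ?_
  have hFE : F ⊆ E := mem_powerset.mp hF
  have hmoment : 0 ≤ ∑ a, ∏ e ∈ F, ψ e a := by
    simpa only [prod_apply] using (∏ e ∈ F, ψ e).sum_nonneg
  have hprod : ∏ e ∈ F, t e ≤ ∏ e ∈ F, t' e :=
    calc ∏ e ∈ F, t e ≤ ∏ e ∈ F, |t e| := abs_prod F t ▸ le_abs_self _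
      _ ≤ ∏ e ∈ F, t' e := prod_le_prod (fun _ _ => abs_nonneg _) fun e he => ht e (hFE he)
  gcongr
  exact prod_nonneg fun e he => hc e (mem_sdiff.mp he).1

end AddChar

/-- `(-1)^b` on the group `(Bool, xor)`. Unlike in `fe` and `edgeSign`, here `true` stands
for the sign `-1`. -/
noncomputable def signChar : AddChar Bool ℝ where
  toFun b := if b then -1 else 1
  map_zero_eq_one' := rfl
  map_add_eq_mul' := by rintro (_ | _) (_ | _) <;> norm_num [Bool.add_eq_xor]

theorem abs_signChar (b : Bool) : |signChar b| = 1 := by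
  cases b <;> simp [signChar]

theorem signChar_not (b : Bool) : signChar (!b) = -signChar b := by
  cases b <;> simp [signChar]

theorem signChar_beq (x y : Bool) : signChar (x == y) = -(signChar x * signChar y) := by
  cases x <;> cases y <;> simp [signChar]

section

variable {V : Type}

noncomputable def edgeChar (e : Sym2 V) : AddChar (V → Bool) ℝ :=
  signChar.compAddMonoidHom
    (Pi.evalAddMonoidHom (fun _ => Bool) (Quot.out e).1 + Pi.evalAddMonoidHom _ (Quot.out e).2)

theorem edgeChar_apply (e : Sym2 V) (σ : V → Bool) :
    edgeChar e σ = signChar (!edgeSign σ e) := by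
  rw [signChar_not, edgeSign, signChar_beq, neg_neg]
  exact signChar.map_add_eq_mul _ _

variable (a : Sym2 V → Matrix (Fin 2) (Fin 2) ℝ) (e : Sym2 V)

theorem fe_eq_add_signChar_mul (b : Bool) :
    fe a e b = (fe a e true + fe a e false) / 2
      + signChar b * ((fe a e false - fe a e true) / 2) := by
  cases b <;> simp [signChar] <;> ring

theorem fe_nonneg (h : ∀ i j, 0 ≤ a e i j) (b : Bool) : 0 ≤ fe a e b := by
  cases b
  · exact mul_nonneg (h 0 1) (h 1 0)
  · exact mul_nonneg (h 0 0) (h 1 1)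

theorem fe_true_le_fe_false (h : a e 0 0 * a e 1 1 - a e 0 1 * a e 1 0 ≤ 0) :
    fe a e true ≤ fe a e false := by
  simpa [fe] using h

end

theorem det_nonpos_signed_sum_le {V : Type} [Fintype V] (G : SimpleGraph V)
    (a : Sym2 V → Matrix (Fin 2) (Fin 2) ℝ)
    (hnn : ∀ e ∈ G.edgeFinset, ∀ i j, 0 ≤ a e i j)
    (hdet : ∀ e ∈ G.edgeFinset, a e 0 0 * a e 1 1 - a e 0 1 * a e 1 0 ≤ 0)
    (s : Sym2 V → Bool) :
    ∑ σ : V → Bool, ∏ e ∈ G.edgeFinset, fe a e (s e == edgeSign σ e)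
      ≤ ∑ σ : V → Bool, ∏ e ∈ G.edgeFinset, fe a e (!(edgeSign σ e)) := by
  set c : Sym2 V → ℝ := fun e => (fe a e true + fe a e false) / 2
  set d : Sym2 V → ℝ := fun e => (fe a e false - fe a e true) / 2
  have hc : ∀ e ∈ G.edgeFinset, 0 ≤ c e := fun e he => by
    have := fe_nonneg a e (hnn e he)
    simp only [c]
    linarith [this true, this false]
  have hd : ∀ e ∈ G.edgeFinset, |signChar (s e) * d e| ≤ d e := fun e he => by
    have := fe_true_le_fe_false a e (hdet e he)
    rw [abs_mul, abs_signChar, one_mul, abs_of_nonneg (by simp only [d]; linarith)]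
  have hL : ∀ σ e,
      fe a e (s e == edgeSign σ e) = c e + edgeChar e σ * (signChar (s e) * d e) := fun σ e => by
    rw [fe_eq_add_signChar_mul, signChar_beq, edgeChar_apply, signChar_not]
    ring
  have hR : ∀ σ e, fe a e (!edgeSign σ e) = c e + edgeChar e σ * d e := fun σ e => by
    rw [fe_eq_add_signChar_mul, edgeChar_apply]
  simp only [hL, hR]
  exact AddChar.sum_prod_add_mul_le _ _ hc hd
end

section
/- Let G be a bipartite graph. Then for any q-coloring count we have hom(G, K_q) ≥ q^{v(G)} ((q−1)/q)^{e(G)}, where hom(G,K_q) is the number of proper colorings of G with q colors. -/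
/-!
Delete an edge `uv` of the bipartite graph `G`. Among the proper colourings of `G - uv`, those
with `C u = C v` are at most a `1/q` fraction: from such a `C` and any colour `c ≠ C v`, swapping
the colours `C v` and `c` on the Kempe chain of `v` gives a colouring that is proper for `G`. The
chain alternates between the two colours, so a walk in it from `v` to the equally coloured `u`
would have even length and close an odd cycle with the edge `uv`. Hence `u` keeps its colour, and
the swap, being an involution, can be undone.
So deleting an edge multiplies the count by at most `q / (q - 1)`, and induction on the number of
edges starting from the `q ^ v(G)` colourings of the empty graph gives the bound.
-/

open scoped Classical

open Finset Fintype

namespace SimpleGraph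

variable {V α : Type*} {G H : SimpleGraph V} {a b : α} {u v x y : V}

/-- The connected components of this graph are the Kempe chains of `f` for the colours `a` and `b`. -/
def kempeGraph (G : SimpleGraph V) (f : V → α) (a b : α) : SimpleGraph V where
  Adj x y := G.Adj x y ∧ (f x = a ∨ f x = b) ∧ (f y = a ∨ f y = b)
  symm := ⟨fun _ _ h => ⟨h.1.symm, h.2.2, h.2.1⟩⟩
  loopless := ⟨fun x h => G.loopless.irrefl x h.1⟩

@[simp]
lemma kempeGraph_adj (f : V → α) :
    (G.kempeGraph f a b).Adj x y ↔
      G.Adj x y ∧ (f x = a ∨ f x = b) ∧ (f y = a ∨ f y = b) :=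
  Iff.rfl

lemma kempeGraph_le (f : V → α) : G.kempeGraph f a b ≤ G := fun _ _ h => h.1

variable [DecidableEq α]

def Coloring.kempeBicoloring (C : G.Coloring α) (a b : α) :
    (G.kempeGraph C a b).Coloring Bool :=
  Coloring.mk (fun x => decide (C x = a)) fun ⟨hxy, hx, hy⟩ => by
    have := C.valid hxy
    rcases hx with hx | hx <;> rcases hy with hy | hy <;> simp_all [eq_comm]

lemma Coloring.even_length_of_kempeGraph (C : G.Coloring α)
    (w : (G.kempeGraph C a b).Walk x y) (h : C x = C y) : Even w.length :=
  ((C.kempeBicoloring a b).even_length_iff_congr w).mpr (by simp [kempeBicoloring, Coloring.mk, h])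

theorem Coloring.not_reachable_kempeGraph (hG : G.Colorable 2) (hHG : H ≤ G) (huv : G.Adj u v)
    (C : H.Coloring α) (h : C u = C v) : ¬ (H.kempeGraph C a b).Reachable v u := by
  rintro ⟨w⟩
  have hcycle := two_colorable_iff_forall_loop_even.mp hG u
    (.cons huv (w.mapLe ((kempeGraph_le _).trans hHG)))
  rw [Walk.length_cons, Walk.length_mapLe, Nat.even_add_one] at hcycle
  exact hcycle (C.even_length_of_kempeGraph w h.symm)

lemma Coloring.swap_ne_of_reachable_of_not_reachable (C : G.Coloring α) (hxy : G.Adj x y)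
    (hx : (G.kempeGraph C a b).Reachable v x) (hy : ¬ (G.kempeGraph C a b).Reachable v y) :
    Equiv.swap a b (C x) ≠ C y := by
  by_cases hCx : C x = a ∨ C x = b
  · have hCy : ¬ (C y = a ∨ C y = b) := fun hCy =>
      hy (hx.trans (Adj.reachable ⟨hxy, hCx, hCy⟩))
    rcases hCx with hCx | hCx <;> simp_all [eq_comm]
  · push Not at hCx
    rw [Equiv.swap_apply_of_ne_of_ne hCx.1 hCx.2]
    exact C.valid hxy

noncomputable def Coloring.kempeSwap (C : G.Coloring α) (v : V) (a b : α) : G.Coloring α :=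
  Coloring.mk (fun x => if (G.kempeGraph C a b).Reachable v x then Equiv.swap a b (C x) else C x)
    fun {x y} hxy => by
      by_cases hx : (G.kempeGraph C a b).Reachable v x <;>
        by_cases hy : (G.kempeGraph C a b).Reachable v y <;> simp only [hx, hy, if_true, if_false]
      · exact (Equiv.swap a b).injective.ne (C.valid hxy)
      · exact C.swap_ne_of_reachable_of_not_reachable hxy hx hy
      · exact (C.swap_ne_of_reachable_of_not_reachable hxy.symm hy hx).symm
      · exact C.valid hxy

lemma Coloring.kempeSwap_apply (C : G.Coloring α) :
    C.kempeSwap v a b x =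
      if (G.kempeGraph C a b).Reachable v x then Equiv.swap a b (C x) else C x := rfl

lemma Coloring.kempeSwap_apply_self (C : G.Coloring α) (h : C v = a) :
    C.kempeSwap v a b v = b := by
  simp [kempeSwap_apply, h]

lemma Coloring.kempeSwap_apply_of_not_reachable (C : G.Coloring α)
    (h : ¬ (G.kempeGraph C a b).Reachable v x) : C.kempeSwap v a b x = C x := by
  simp [kempeSwap_apply, h]

lemma Coloring.kempeSwap_apply_of_eq (hG : G.Colorable 2) (hHG : H ≤ G) (huv : G.Adj u v)
    (C : H.Coloring α) (h : C u = C v) : C.kempeSwap v a b u = C u :=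
  C.kempeSwap_apply_of_not_reachable (C.not_reachable_kempeGraph hG hHG huv h)

lemma Coloring.kempeGraph_kempeSwap (C : G.Coloring α) :
    G.kempeGraph (C.kempeSwap v a b) a b = G.kempeGraph C a b := by
  have key : ∀ x,
      (C.kempeSwap v a b x = a ∨ C.kempeSwap v a b x = b) ↔ (C x = a ∨ C x = b) := by
    intro x
    rw [kempeSwap_apply]
    split_ifs <;> simp [Equiv.swap_apply_eq_iff, or_comm]
  ext x y
  simp only [kempeGraph_adj, key]

lemma Coloring.kempeSwap_kempeSwap (C : G.Coloring α) :
    (C.kempeSwap v a b).kempeSwap v a b = C := by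
  ext x
  rw [kempeSwap_apply, kempeGraph_kempeSwap, kempeSwap_apply]
  split_ifs <;> simp

def Coloring.equivDeleteEdge (huv : G.Adj u v) :
    G.Coloring α ≃ {C : (G.deleteEdges {s(u, v)}).Coloring α // C u ≠ C v} where
  toFun C := ⟨C.comp (Hom.ofLE (deleteEdges_le _)), C.valid huv⟩
  invFun C := Coloring.mk C.1 fun {x y} hxy => by
    by_cases he : s(x, y) = s(u, v)
    · rcases Sym2.eq_iff.mp he with ⟨rfl, rfl⟩ | ⟨rfl, rfl⟩
      exacts [C.2, C.2.symm]
    · exact C.1.valid ((deleteEdges_adj ..).mpr ⟨hxy, he⟩)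
  left_inv _ := rfl
  right_inv _ := rfl

def Coloring.equivBot : (⊥ : SimpleGraph V).Coloring α ≃ (V → α) where
  toFun C := C
  invFun f := Coloring.mk f fun h => h.elim
  left_inv _ := rfl
  right_inv _ := rfl

variable [Fintype V] [Fintype α]

theorem Coloring.card_sub_one_mul_card_eq_le_card_ne (hG : G.Colorable 2) (hHG : H ≤ G)
    (huv : G.Adj u v) :
    (card α - 1) * #{C : H.Coloring α | C u = C v} ≤ #{C : H.Coloring α | C u ≠ C v} := by
  set D : Finset (H.Coloring α) := {C | C u = C v}
  have hcard : #(D.sigma fun C => univ.erase (C v)) = (card α - 1) * #D := by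
    simp only [card_sigma, card_erase_of_mem, mem_univ, card_univ, sum_const, smul_eq_mul, mul_comm]
  rw [← hcard]
  -- `C` and `c` are recovered from the swapped colouring `K`: `c = K v`, and `C v = C u = K u`.
  refine card_le_card_of_injOn (fun p => p.1.kempeSwap v (p.1 v) p.2) ?_ ?_
  · rintro ⟨C, c⟩ hp
    simp only [D, mem_coe, mem_sigma, mem_filter, mem_univ, true_and, mem_erase, ne_eq,
      and_true] at hp ⊢
    rw [C.kempeSwap_apply_of_eq hG hHG huv hp.1, C.kempeSwap_apply_self rfl, hp.1]
    exact Ne.symm hp.2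
  · rintro ⟨C₁, c₁⟩ h₁ ⟨C₂, c₂⟩ h₂ h
    simp only [D, mem_coe, mem_sigma, mem_filter, mem_univ, true_and] at h₁ h₂ h
    have hc : c₁ = c₂ := by simpa only [Coloring.kempeSwap_apply_self _ rfl] using congr($h v)
    have hC : C₁ v = C₂ v := by
      simpa only [← h₁.1, ← h₂.1, Coloring.kempeSwap_apply_of_eq hG hHG huv _ h₁.1,
        Coloring.kempeSwap_apply_of_eq hG hHG huv _ h₂.1] using congr($h u)
    obtain rfl : C₁ = C₂ := by
      rw [← C₁.kempeSwap_kempeSwap (v := v) (a := C₁ v) (b := c₁), h, hC, hc,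
        Coloring.kempeSwap_kempeSwap]
    rw [hc]

theorem sub_one_div_mul_card_coloring_deleteEdges_le (hG : G.Colorable 2) (huv : G.Adj u v) :
    ((card α : ℝ) - 1) / card α * card ((G.deleteEdges {s(u, v)}).Coloring α) ≤
      card (G.Coloring α) := by
  obtain hα | hα := isEmpty_or_nonempty α
  · simp
  set H := G.deleteEdges {s(u, v)}
  have hsplit : #{C : H.Coloring α | C u = C v} + #{C : H.Coloring α | C u ≠ C v} =
      card (H.Coloring α) := card_filter_add_card_filter_not _
  have hH : card (G.Coloring α) = #{C : H.Coloring α | C u ≠ C v} := by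
    rw [card_congr (Coloring.equivDeleteEdge huv), Fintype.card_subtype]
  have hkempe :=
    Coloring.card_sub_one_mul_card_eq_le_card_ne (α := α) (H := H) hG (deleteEdges_le _) huv
  rw [← Nat.cast_le (α := ℝ), Nat.cast_mul, Nat.cast_pred Fintype.card_pos] at hkempe
  have : (1 : ℝ) ≤ card α := by exact_mod_cast Fintype.card_pos
  rw [← hsplit, hH, div_mul_eq_mul_div, div_le_iff₀ (by positivity)]
  push_cast
  nlinarith

theorem card_pow_mul_le_card_coloring [DecidableRel G.Adj] (hG : G.Colorable 2) :
    (card α : ℝ) ^ card V * (((card α : ℝ) - 1) / card α) ^ #G.edgeFinset ≤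
      card (G.Coloring α) := by
  induction hn : #G.edgeFinset generalizing G with
  | zero =>
    obtain rfl : G = ⊥ := edgeFinset_eq_empty.mp (card_eq_zero.mp hn)
    simp [card_congr Coloring.equivBot]
  | succ n ih =>
    obtain ⟨e, he⟩ : G.edgeFinset.Nonempty := Finset.card_pos.mp (by omega)
    induction e using Sym2.ind with | h u v => ?_
    have huv : G.Adj u v := by simpa using he
    have hn' : #(G.deleteEdges {s(u, v)}).edgeFinset = n := by
      have : (G.deleteEdges {s(u, v)}).edgeFinset = G.edgeFinset.erase s(u, v) := by
        ext; simp [and_comm]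
      rw [this, card_erase_of_mem he, hn, Nat.add_sub_cancel]
    have hr : 0 ≤ ((card α : ℝ) - 1) / card α := by
      obtain hα | hα := isEmpty_or_nonempty α
      · simp
      · exact div_nonneg (sub_nonneg.mpr (by exact_mod_cast Fintype.card_pos)) (by positivity)
    calc (card α : ℝ) ^ card V * (((card α : ℝ) - 1) / card α) ^ (n + 1)
        = ((card α : ℝ) - 1) / card α *
            ((card α : ℝ) ^ card V * (((card α : ℝ) - 1) / card α) ^ n) := by ring
      _ ≤ ((card α : ℝ) - 1) / card α * card ((G.deleteEdges {s(u, v)}).Coloring α) :=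
          mul_le_mul_of_nonneg_left (ih (hG.mono_left (deleteEdges_le _)) hn') hr
      _ ≤ card (G.Coloring α) := sub_one_div_mul_card_coloring_deleteEdges_le hG huv

end SimpleGraph

theorem bipartite_coloring_lower_bound_general {V : Type} [Fintype V] (G : SimpleGraph V)
    (hbip : G.Colorable 2) (q : ℕ) :
    (q : ℝ) ^ (Fintype.card V) * (((q : ℝ) - 1) / q) ^ G.edgeFinset.card
      ≤ (Nat.card (G →g SimpleGraph.completeGraph (Fin q)) : ℝ) := by
  simpa [Nat.card_eq_fintype_card] using G.card_pow_mul_le_card_coloring (α := Fin q) hbip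

/-- For a bipartite graph `G`, the number of proper `q`-colorings (homomorphisms
into the complete graph `K_q`) is at least `q^{v(G)} ((q−1)/q)^{e(G)}`. -/
theorem bipartite_coloring_lower_bound {V : Type} [Fintype V] (G : SimpleGraph V)
    (hbip : G.Colorable 2) (q : ℕ) (hq : 1 ≤ q) :
    (q : ℝ) ^ (Fintype.card V) * (((q : ℝ) - 1) / q) ^ G.edgeFinset.card
      ≤ (Nat.card (G →g SimpleGraph.completeGraph (Fin q)) : ℝ) :=
  bipartite_coloring_lower_bound_general G hbip q
end
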